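/- Let P ∈ B(H) be a bounded idempotent. Define P1 ∈ B(R(P)^⊥, R(P)) by P1 y = P y for y ∈ R(P)^⊥, and Q1 ∈ B(R(I−P)^⊥, R(I−P)) by Q1 y = (I−P) y for y ∈ R(I−P)^⊥. Then, as subspaces of H, the kernel of P1* equals the kernel of Q1, and both equal R(P) ∩ R(P*); likewise the kernel of P1 equals the kernel of Q1*, and both equal N(P) ∩ N(P*). Consequently P_{N(P1*)} = P_{N(Q1)} and P_{N(P1)} = P_{N(Q1*)}. -/

import Mathlib

/-! `ker P1 = ker P ⊓ (range P)ᗮ`, and `(range P)ᗮ = ker P†`. Dually `w ∈ range P` lies in `ker P1†`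
iff `P† w ⊥ (range P)ᗮ`, i.e. `P† w ∈ range P` since the range of an idempotent is closed; then
`P† w - w` lies in `range P` and in `ker P† = (range P)ᗮ`, so `P† w = w`, i.e. `w ∈ range P†`.
Since `Q1 P = P1 (1 - P)`, the kernels of `Q1` and `Q1†` are obtained by applying this to the
idempotent `1 - P`, for which `ker (1 - P) = range P`, `range (1 - P) = ker P`, `(1 - P)† = 1 - P†`.
-/

open ContinuousLinearMap

variable {H : Type*} [NormedAddCommGroup H] [InnerProductSpace ℂ H] [CompleteSpace H]

theorem range_idem_eq_ker (P : H →L[ℂ] H) (hP : P * P = P) :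
    LinearMap.range P.toLinearMap = LinearMap.ker (1 - P).toLinearMap := by
  ext x
  constructor
  · rintro ⟨y, rfl⟩
    have h : P (P y) = P y := by
      have := congrArg (fun T : H →L[ℂ] H => T y) hP
      simpa using this
    simp [LinearMap.mem_ker, h]
  · intro hx
    have h : x - P x = 0 := by simpa using hx
    exact ⟨x, (sub_eq_zero.mp h).symm⟩

theorem isClosed_range_idem (P : H →L[ℂ] H) (hP : P * P = P) :
    IsClosed ((LinearMap.range P.toLinearMap : Submodule ℂ H) : Set H) := by
  rw [range_idem_eq_ker P hP]
  exact ContinuousLinearMap.isClosed_ker _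

theorem mul_one_sub_idem (P : H →L[ℂ] H) (hP : P * P = P) :
    (1 - P) * (1 - P) = 1 - P := by
  rw [sub_mul, mul_sub, mul_sub, one_mul, mul_one, hP]
  abel

/-- The corner `P1 ∈ B(R(P)^⊥, R(P))` of an idempotent `P`, given by `P1 y = P y`. -/
noncomputable def P1 (P : H →L[ℂ] H) :
    ((LinearMap.range P.toLinearMap)ᗮ : Submodule ℂ H) →L[ℂ] (LinearMap.range P.toLinearMap : Submodule ℂ H) :=
  ContinuousLinearMap.codRestrict (P ∘L ((LinearMap.range P.toLinearMap)ᗮ).subtypeL) (LinearMap.range P.toLinearMap)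
    (fun y => ⟨y, rfl⟩)

/-- The corresponding corner `Q1 ∈ B(R(I−P)^⊥, R(I−P))` of the idempotent `I − P`. -/
noncomputable def Q1 (P : H →L[ℂ] H) :
    ((LinearMap.range (1 - P).toLinearMap)ᗮ : Submodule ℂ H) →L[ℂ]
      (LinearMap.range (1 - P).toLinearMap : Submodule ℂ H) :=
  P1 (1 - P)

open scoped InnerProduct

theorem range_one_sub_idem (P : H →L[ℂ] H) (hP : P * P = P) : (1 - P).range = P.ker := by
  rw [range_idem_eq_ker (1 - P) (mul_one_sub_idem P hP), sub_sub_cancel]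

section Adjoint

variable {𝕜 E : Type*} [RCLike 𝕜] [NormedAddCommGroup E] [InnerProductSpace 𝕜 E] [CompleteSpace E]

theorem adjoint_one_sub (p : E →L[𝕜] E) : (1 - p)† = 1 - p† := by
  simp only [← star_eq_adjoint, star_sub, star_one]

theorem IsIdempotentElem.adjoint {p : E →L[𝕜] E} (hp : IsIdempotentElem p) :
    IsIdempotentElem (p†) := by
  simpa only [star_eq_adjoint] using hp.star

theorem IsIdempotentElem.mem_range_adjoint_iff_of_mem_range {p : E →L[𝕜] E}
    (hp : IsIdempotentElem p) {w : E} (hw : w ∈ p.range) :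
    w ∈ (p†).range ↔ (p†) w ∈ p.range := by
  rw [LinearMap.IsIdempotentElem.mem_range_iff hp.adjoint.toLinearMap, coe_coe]
  refine ⟨fun h ↦ by rwa [h], fun h ↦ ?_⟩
  have hdefect_range : (p†) w - w ∈ p.range := sub_mem h hw
  have hdefect_orth : (p†) w - w ∈ p.rangeᗮ := by
    rw [orthogonal_range, LinearMap.mem_ker, coe_coe, map_sub, ← mul_apply_eq_comp,
      hp.adjoint.eq, sub_self]
  have hdefect : (p†) w - w ∈ p.range ⊓ p.rangeᗮ := ⟨hdefect_range, hdefect_orth⟩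
  rwa [Submodule.inf_orthogonal_eq_bot, Submodule.mem_bot, sub_eq_zero] at hdefect

end Adjoint

theorem map_ker_P1 (P : H →L[ℂ] H) :
    (P1 P).ker.map P.rangeᗮ.subtype = P.ker ⊓ (P†).ker := by
  ext x
  constructor
  · rintro ⟨y, hy, rfl⟩
    exact ⟨congrArg Subtype.val hy, orthogonal_range P ▸ y.2⟩
  · rintro ⟨hPx, hx⟩
    exact ⟨⟨x, orthogonal_range P ▸ hx⟩, Subtype.ext hPx, rfl⟩

theorem adjoint_P1_apply_eq_zero_iff (P : H →L[ℂ] H) [CompleteSpace P.range] (w : P.range) :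
    ((P1 P)†) w = 0 ↔ (P†) w ∈ P.rangeᗮᗮ := by
  have hker : ((P1 P)†) w = 0 ↔ w ∈ (P1 P).rangeᗮ := by
    rw [orthogonal_range (P1 P)]; rfl
  have hinner (y : P.rangeᗮ) : inner ℂ (P1 P y) w = inner ℂ (y : H) ((P†) w) :=
    (adjoint_inner_right P y w).symm
  rw [hker, Submodule.mem_orthogonal, Submodule.mem_orthogonal]
  constructor
  · intro h u hu
    exact hinner ⟨u, hu⟩ ▸ h _ ⟨⟨u, hu⟩, rfl⟩
  · rintro h _ ⟨y, rfl⟩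
    exact (hinner y).symm ▸ h y y.2

theorem map_ker_adjoint_P1 {P : H →L[ℂ] H} (hP : IsIdempotentElem P) [CompleteSpace P.range] :
    ((P1 P)†).ker.map P.range.subtype = P.range ⊓ (P†).range := by
  ext x
  constructor
  · rintro ⟨w, hw, rfl⟩
    have hw' := (adjoint_P1_apply_eq_zero_iff P w).1 hw
    rw [Submodule.orthogonal_orthogonal] at hw'
    exact ⟨w.2, (hP.mem_range_adjoint_iff_of_mem_range w.2).2 hw'⟩
  · rintro ⟨hx, hx'⟩
    refine ⟨⟨x, hx⟩, (adjoint_P1_apply_eq_zero_iff P _).2 ?_, rfl⟩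
    rw [Submodule.orthogonal_orthogonal]
    exact (hP.mem_range_adjoint_iff_of_mem_range hx).1 hx'

/-- As subspaces of `H`: `N(P1*) = N(Q1) = R(P) ∩ R(P*)` and
`N(P1) = N(Q1*) = N(P) ∩ N(P*)`. -/
theorem ker_P1_Q1 (P : H →L[ℂ] H) (hP : P * P = P) :
    letI : CompleteSpace (LinearMap.range P.toLinearMap) := (isClosed_range_idem P hP).completeSpace_coe
    letI : CompleteSpace (LinearMap.range (1 - P).toLinearMap) :=
      (isClosed_range_idem (1 - P) (mul_one_sub_idem P hP)).completeSpace_coe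
    ((LinearMap.ker (adjoint (P1 P)).toLinearMap).map (LinearMap.range P.toLinearMap).subtype =
        (LinearMap.ker (Q1 P).toLinearMap).map ((LinearMap.range (1 - P).toLinearMap)ᗮ).subtype ∧
      (LinearMap.ker (adjoint (P1 P)).toLinearMap).map (LinearMap.range P.toLinearMap).subtype =
        LinearMap.range P.toLinearMap ⊓ LinearMap.range (adjoint P).toLinearMap ∧
      (LinearMap.ker (P1 P).toLinearMap).map ((LinearMap.range P.toLinearMap)ᗮ).subtype =
        (LinearMap.ker (adjoint (Q1 P)).toLinearMap).map (LinearMap.range (1 - P).toLinearMap).subtype ∧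
      (LinearMap.ker (P1 P).toLinearMap).map ((LinearMap.range P.toLinearMap)ᗮ).subtype =
        LinearMap.ker P.toLinearMap ⊓ LinearMap.ker (adjoint P).toLinearMap) := by
  have hP' : IsIdempotentElem P := hP
  have := (isClosed_range_idem P hP).completeSpace_coe
  have := (isClosed_range_idem (1 - P) (mul_one_sub_idem P hP)).completeSpace_coe
  have hker_Q1 : (P1 (1 - P)).ker.map (1 - P).rangeᗮ.subtype = P.range ⊓ (P†).range := by
    rw [map_ker_P1, adjoint_one_sub, ← range_idem_eq_ker P hP,
      ← range_idem_eq_ker (P†) hP'.adjoint]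
  have hker_adjoint_Q1 : ((P1 (1 - P))†).ker.map (1 - P).range.subtype = P.ker ⊓ (P†).ker := by
    rw [map_ker_adjoint_P1 hP'.one_sub, adjoint_one_sub, range_one_sub_idem P hP,
      range_one_sub_idem (P†) hP'.adjoint]
  exact ⟨(map_ker_adjoint_P1 hP').trans hker_Q1.symm, map_ker_adjoint_P1 hP',
    (map_ker_P1 P).trans hker_adjoint_Q1.symm, map_ker_P1 P⟩
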